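/- arXiv:1506.01174 — 3 statements merged into one kernel-verified Lean document; each statement's English description precedes it below -/
import Mathlib

section
/- Let S₄ act on {0,1,2,3} and for each permutation σ ∈ S₄ define ε_σ : {0,1,2,3} → {1,−1} by ε_σ(f) = sgn(σ)·(−1)^{σ⁻¹(f)}. Then for all σ, σ′ ∈ S₄ one has ε_σ = ε_{σ′} if and only if σ⁻¹σ′ lies in the cyclic subgroup generated by the 4-cycle (0 1 2 3). Consequently, every fiber of the map σ ↦ ε_σ has exactly 4 elements, and its image is exactly the set of functions {0,1,2,3} → {1,−1} taking the value +1 at exactly two points (so the image has 6 elements). -/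
open Finset

/-- The sign/co-orientation function of a branching: `ε σ f = sgn(σ)·(−1)^{σ⁻¹(f)}`. -/
noncomputable def epsFace (σ : Equiv.Perm (Fin 4)) : Fin 4 → ℤ :=
  fun f => (Equiv.Perm.sign σ : ℤ) * (-1 : ℤ) ^ ((σ.symm f : ℕ))

lemma orderOf_finRotate4 : orderOf (finRotate 4) = 4 := by
  rw [orderOf_eq_iff (by norm_num)]
  exact ⟨by decide, by decide⟩

set_option maxHeartbeats 2000000 in
lemma epsFace_eq_iff_finset : ∀ σ σ' : Equiv.Perm (Fin 4), epsFace σ = epsFace σ' ↔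
    σ⁻¹ * σ' ∈ ({1, finRotate 4, (finRotate 4)^2, (finRotate 4)^3} :
      Finset (Equiv.Perm (Fin 4))) := by decide

lemma mem_zpowers_iff_finset (x : Equiv.Perm (Fin 4)) :
    x ∈ Subgroup.zpowers (finRotate 4) ↔
    x ∈ ({1, finRotate 4, (finRotate 4)^2, (finRotate 4)^3} :
      Finset (Equiv.Perm (Fin 4))) := by
  constructor
  · rintro ⟨k, rfl⟩
    have h4 : (finRotate 4) ^ (k % 4) = (finRotate 4) ^ k := by
      conv_rhs => rw [← zpow_mod_orderOf]
      rw [orderOf_finRotate4]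
      norm_num
    show finRotate 4 ^ k ∈ _
    rw [← h4]
    have h0 : 0 ≤ k % 4 := Int.emod_nonneg k (by norm_num)
    have h1 : k % 4 < 4 := Int.emod_lt_of_pos k (by norm_num)
    have : k % 4 = 0 ∨ k % 4 = 1 ∨ k % 4 = 2 ∨ k % 4 = 3 := by omega
    rcases this with h | h | h | h <;> rw [h] <;> decide
  · intro h
    simp only [Finset.mem_insert, Finset.mem_singleton] at h
    rcases h with h | h | h | h
    · exact ⟨0, by simp [h]⟩
    · exact ⟨1, by simp [h]⟩
    · exact ⟨2, by
        show finRotate 4 ^ (2:ℤ) = x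
        rw [show (2:ℤ) = ((2:ℕ):ℤ) by norm_num, zpow_natCast, h]⟩
    · exact ⟨3, by
        show finRotate 4 ^ (3:ℤ) = x
        rw [show (3:ℤ) = ((3:ℕ):ℤ) by norm_num, zpow_natCast, h]⟩

set_option maxHeartbeats 4000000 in
lemma fiber_card : ∀ σ : Equiv.Perm (Fin 4),
    (Finset.univ.filter (fun τ : Equiv.Perm (Fin 4) => epsFace τ = epsFace σ)).card = 4 := by
  decide

set_option maxHeartbeats 2000000 in
lemma epsFace_props : ∀ σ : Equiv.Perm (Fin 4), (∀ f, epsFace σ f = 1 ∨ epsFace σ f = -1) ∧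
    (Finset.univ.filter (fun f => epsFace σ f = 1)).card = 2 := by decide

set_option maxHeartbeats 2000000 in
lemma exists_eps_of_bool : ∀ b : Fin 4 → Bool,
    (Finset.univ.filter (fun f => b f = true)).card = 2 →
    ∃ σ, epsFace σ = fun f => if b f then (1:ℤ) else -1 := by decide

theorem branchings_over_prebranching :
    (∀ σ σ' : Equiv.Perm (Fin 4),
        epsFace σ = epsFace σ' ↔ σ⁻¹ * σ' ∈ Subgroup.zpowers (finRotate 4)) ∧
    (∀ σ : Equiv.Perm (Fin 4),
        (Finset.univ.filter (fun τ : Equiv.Perm (Fin 4) => epsFace τ = epsFace σ)).card = 4) ∧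
    Set.range epsFace =
      {g : Fin 4 → ℤ | (∀ f, g f = 1 ∨ g f = -1) ∧
        (Finset.univ.filter (fun f => g f = 1)).card = 2} := by
  refine ⟨fun σ σ' => (epsFace_eq_iff_finset σ σ').trans
    (mem_zpowers_iff_finset _).symm, fiber_card, ?_⟩
  ext g
  constructor
  · rintro ⟨σ, rfl⟩
    exact epsFace_props σ
  · rintro ⟨h1, h2⟩
    have hg : g = fun f => if decide (g f = 1) then (1:ℤ) else -1 := by
      funext f
      rcases h1 f with h | h <;> simp [h]
    have hc : (Finset.univ.filter (fun f => decide (g f = 1) = true)).card = 2 := by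
      rw [← h2]
      congr 1
      ext f
      simp
    obtain ⟨σ, hσ⟩ := exists_eps_of_bool _ hc
    exact ⟨σ, by rw [hσ, ← hg]⟩
end

section
/- Let K be a triangulation of a closed surface with V vertices, E edges, F triangles (2E = 3F), each triangle having exactly one distinguished corner, and r(v) the number of distinguished corners at vertex v. If r(v) ≥ 2 for every vertex v, then V − E + F ≤ 0. If moreover r(v) = 2 for every vertex v, then V − E + F = 0. -/
open Finset

theorem taut_charge_euler_nonpositive
    (Vtx Tri : Type) [Fintype Vtx] [Fintype Tri] [DecidableEq Vtx]
    (E : ℕ)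
    (vmap : Tri × Fin 3 → Vtx)  -- incidence of corners to vertices
    (d : Tri → Fin 3)           -- the distinguished corner of each triangle
    (hEF : 2 * E = 3 * Fintype.card Tri) :
    ((∀ v : Vtx, 2 ≤ (Finset.univ.filter (fun t : Tri => vmap (t, d t) = v)).card) →
        (Fintype.card Vtx : ℤ) - (E : ℤ) + (Fintype.card Tri : ℤ) ≤ 0) ∧
    ((∀ v : Vtx, (Finset.univ.filter (fun t : Tri => vmap (t, d t) = v)).card = 2) →
        (Fintype.card Vtx : ℤ) - (E : ℤ) + (Fintype.card Tri : ℤ) = 0) := by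
  have hsum : ∑ v : Vtx, (Finset.univ.filter (fun t : Tri => vmap (t, d t) = v)).card
      = Fintype.card Tri := by
    rw [Fintype.card, Finset.card_eq_sum_card_fiberwise
      (f := fun t : Tri => vmap (t, d t)) (t := Finset.univ) (fun _ _ => mem_univ _)]
  constructor
  · intro h
    have h2 : 2 * Fintype.card Vtx ≤ Fintype.card Tri := by
      rw [← hsum]
      calc 2 * Fintype.card Vtx = ∑ _v : Vtx, 2 := by
            rw [Finset.sum_const, smul_eq_mul, Fintype.card, mul_comm]
        _ ≤ _ := Finset.sum_le_sum (fun v _ => h v)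
    have := hEF
    omega
  · intro h
    have h2 : 2 * Fintype.card Vtx = Fintype.card Tri := by
      rw [← hsum]
      calc 2 * Fintype.card Vtx = ∑ _v : Vtx, 2 := by
            rw [Finset.sum_const, smul_eq_mul, Fintype.card, mul_comm]
        _ = _ := Finset.sum_congr rfl (fun v _ => (h v).symm)
    omega
end

section
/- Let N ≥ 1 be odd and let w₀, w₁ ∈ ℂ avoid the closed negative real half-line (−∞,0] (in particular w₀, w₁ ≠ 0, so the principal logarithm satisfies Log(1/w_k) = −Log(w_k)). Let f₀, f₁, c₀, c₁ ∈ ℤ. For a sign ε ∈ {1,−1} and data (u₀,u₁,g₀,g₁,a₀,a₁), define 𝐮_k := exp((Log(u_k) + iπ(N+1)(g_k − ε a_k))/N) and α(ε; u,g,a) := (𝐮₀^{−a₁}·𝐮₁^{a₀})^{(N−1)/2}. Then α(+1; (w₀,w₁),(f₀,f₁),(c₀,c₁)) = α(−1; (w₁⁻¹,w₀⁻¹),(−f₁,−f₀),(c₁,c₀)). -/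
open Complex

/-- Local symmetrization factor of a QH tetrahedron with branching sign `ε`,
shape parameters `u₀ u₁`, flattenings `g₀ g₁` and charges `a₀ a₁`. -/
noncomputable def locSymFactor (N : ℕ) (ε : ℤ) (u₀ u₁ : ℂ) (g₀ g₁ a₀ a₁ : ℤ) : ℂ :=
  ((Complex.exp ((Complex.log u₀ + Real.pi * Complex.I * (N + 1) * (g₀ - ε * a₀)) / N)) ^ (-a₁)
    * (Complex.exp ((Complex.log u₁ + Real.pi * Complex.I * (N + 1) * (g₁ - ε * a₁)) / N)) ^ a₀)
    ^ ((N - 1) / 2)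

theorem symmetrization_factor_branching_change
    (N : ℕ) (hN : Odd N) (hN1 : 1 ≤ N)
    (w₀ w₁ : ℂ)
    (hw₀ : w₀ ∉ {z : ℂ | z.im = 0 ∧ z.re ≤ 0})
    (hw₁ : w₁ ∉ {z : ℂ | z.im = 0 ∧ z.re ≤ 0})
    (f₀ f₁ c₀ c₁ : ℤ) :
    locSymFactor N 1 w₀ w₁ f₀ f₁ c₀ c₁
      = locSymFactor N (-1) w₁⁻¹ w₀⁻¹ (-f₁) (-f₀) c₁ c₀ := by
  have hlog : ∀ w : ℂ, w ∉ {z : ℂ | z.im = 0 ∧ z.re ≤ 0} →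
      Complex.log w⁻¹ = -Complex.log w := by
    intro w h
    rw [Complex.log_inv_eq_ite, if_neg]
    intro harg
    rw [Complex.arg_eq_pi_iff] at harg
    exact h ⟨harg.2, harg.1.le⟩
  unfold locSymFactor
  rw [hlog w₀ hw₀, hlog w₁ hw₁]
  congr 1
  have e0 : (-Complex.log w₁ + Real.pi * Complex.I * (N + 1) * ((-f₁ : ℤ) - (-1 : ℤ) * c₁)) / N
      = -((Complex.log w₁ + Real.pi * Complex.I * (N + 1) * ((f₁ : ℤ) - (1 : ℤ) * c₁)) / N) := by
    push_cast; ring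
  have e1 : (-Complex.log w₀ + Real.pi * Complex.I * (N + 1) * ((-f₀ : ℤ) - (-1 : ℤ) * c₀)) / N
      = -((Complex.log w₀ + Real.pi * Complex.I * (N + 1) * ((f₀ : ℤ) - (1 : ℤ) * c₀)) / N) := by
    push_cast; ring
  rw [e0, e1, Complex.exp_neg, Complex.exp_neg]
  rw [inv_zpow', inv_zpow', neg_neg, mul_comm]
end
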